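/- Let k be a positive integer, Q a primitive string, and S a string with |S| ≥ (2k+1)|Q|. If δ_E(S, Q^∞[ℓ..r)) ≤ k and δ_E(S, Q^∞[ℓ'..r')) ≤ k for integers ℓ ≤ r and ℓ' ≤ r', then there are integers j, j' and a decomposition S = S_L · S_R such that δ_E(S, Q^∞[ℓ..r)) = δ_E(S_L, Q^∞[ℓ..j|Q|)) + δ_E(S_R, Q^∞[j|Q|..r)) and δ_E(S, Q^∞[ℓ'..r')) = δ_E(S_L, Q^∞[ℓ'..j'|Q|)) + δ_E(S_R, Q^∞[j'|Q|..r')). Moreover, if |Q| = 1, the length assumption on S is unnecessary. -/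

import Mathlib

open List

variable {α : Type*}

/-- The fragment S[i..j) of a string (list) S. -/
def frag (S : List α) (i j : ℕ) : List α := (S.drop i).take (j - i)

/-- Q^∞[a..b): the fragment of the infinite repetition of Q from a (incl.) to b (excl.). -/
def repPrefix [Inhabited α] (Q : List α) (a b : ℕ) : List α :=
  (List.range' a (b - a)).map (fun i => Q.getD (i % Q.length) default)

/-- Hamming distance of two strings of the same length (counted over positions of S). -/
def hamming [DecidableEq α] [Inhabited α] (S T : List α) : ℕ :=
  ((Finset.range S.length).filter
    (fun i => S.getD i default ≠ T.getD i default)).card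

/-- δ_H(S, Q*): Hamming distance of S to the length-|S| prefix of Q^∞. -/
def hammingStar [DecidableEq α] [Inhabited α] (S Q : List α) : ℕ :=
  hamming S (repPrefix Q 0 S.length)

/-- The cost structure of Mathlib's former `Levenshtein.Cost` (removed from Mathlib). -/
structure Levenshtein.Cost (α₀ β₀ δ₀ : Type*) where
  delete : α₀ → δ₀
  insert : β₀ → δ₀
  substitute : α₀ → β₀ → δ₀

/-- Mathlib's former `Levenshtein.defaultCost`: unit costs, free exact match. -/
def Levenshtein.defaultCost {α₀ : Type*} [DecidableEq α₀] : Levenshtein.Cost α₀ α₀ ℕ where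
  delete _ := 1
  insert _ := 1
  substitute a b := if a = b then 0 else 1

/-- Mathlib's former `levenshtein`, by its characterising recursion equations. -/
def levenshtein {α₀ β₀ δ₀ : Type*} [AddZeroClass δ₀] [Min δ₀] (C : Levenshtein.Cost α₀ β₀ δ₀) :
    List α₀ → List β₀ → δ₀
  | [], [] => 0
  | [], y :: ys => C.insert y + levenshtein C [] ys
  | x :: xs, [] => C.delete x + levenshtein C xs []
  | x :: xs, y :: ys => min (C.delete x + levenshtein C xs (y :: ys))
      (min (C.insert y + levenshtein C (x :: xs) ys) (C.substitute x y + levenshtein C xs ys))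

/-- Edit (Levenshtein) distance. -/
def editDist [DecidableEq α] (S T : List α) : ℕ :=
  levenshtein Levenshtein.defaultCost S T

/-- A string is primitive if it is nonempty and not a proper power of a string. -/
def Primitive (Q : List α) : Prop :=
  Q ≠ [] ∧ ∀ (U : List α) (t : ℕ), 2 ≤ t → Q ≠ (List.replicate t U).flatten

/-- p is a period of S. -/
def IsPeriod [Inhabited α] (p : ℕ) (S : List α) : Prop :=
  0 < p ∧ ∀ i, i + p < S.length → S.getD i default = S.getD (i + p) default

/-- per(S): the smallest period of S. -/
noncomputable def per [Inhabited α] (S : List α) : ℕ := sInf {p | IsPeriod p S}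

/-- Occ^H_k(P,T): starting positions of k-mismatch occurrences of P in T. -/
def occH [DecidableEq α] [Inhabited α] (k : ℕ) (P T : List α) : Finset ℕ :=
  (Finset.range (T.length - P.length + 1)).filter
    (fun i => hamming P (frag T i (i + P.length)) ≤ k)

/-- Exact occurrences of B in T. -/
def occExact [DecidableEq α] (B T : List α) : Finset ℕ :=
  (Finset.range (T.length + 1)).filter (fun i => frag T i (i + B.length) = B)

/-- Occ^E_k(P,T): starting positions of k-error (edit distance) occurrences of P in T. -/
def occE [DecidableEq α] (k : ℕ) (P T : List α) : Set ℕ :=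
  {i | ∃ j, i ≤ j ∧ j ≤ T.length ∧ editDist P (frag T i j) ≤ k}

/-- δ_E^cyc(S,Q): minimum edit distance of S to any substring of Q^∞. -/
noncomputable def edCyc [DecidableEq α] [Inhabited α] (S Q : List α) : ℕ :=
  sInf {d | ∃ i j, i ≤ j ∧ d = editDist S (repPrefix Q i j)}

/-- δ_E(S,Q*): minimum edit distance of S to a prefix of Q^∞. -/
noncomputable def edStar [DecidableEq α] [Inhabited α] (S Q : List α) : ℕ :=
  sInf {d | ∃ j, d = editDist S (repPrefix Q 0 j)}

/-- Minimum edit distance of T to a substring of Q^∞ starting at position x. -/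
noncomputable def edStarAt [DecidableEq α] [Inhabited α] (T Q : List α) (x : ℕ) : ℕ :=
  sInf {d | ∃ j, x ≤ j ∧ d = editDist T (repPrefix Q x j)}

/-- Minimum edit distance of T to a substring of Q^∞ ending at a position ≡ y (mod |Q|). -/
noncomputable def edEndAt [DecidableEq α] [Inhabited α] (T Q : List α) (y : ℕ) : ℕ :=
  sInf {d | ∃ i j, i ≤ j ∧ j % Q.length = y % Q.length ∧ d = editDist T (repPrefix Q i j)}

/-- Minimum edit distance of L to a substring of Q^∞ ending at a multiple of |Q|. -/
noncomputable def edEndMul [DecidableEq α] [Inhabited α] (L Q : List α) : ℕ :=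
  sInf {d | ∃ i j, i ≤ j * Q.length ∧ d = editDist L (repPrefix Q i (j * Q.length))}

/-- The fragment S[i..j) of S is locked with respect to Q. -/
def Locked [DecidableEq α] [Inhabited α] (S Q : List α) (i j : ℕ) : Prop :=
  (∃ a : ℕ, edCyc (frag S i j) Q = editDist (frag S i j) (repPrefix Q 0 (a * Q.length))) ∨
  (j = S.length ∧ edCyc (frag S i j) Q = edStar (frag S i j) Q) ∨
  (i = 0 ∧ edCyc (frag S i j) Q = edEndMul (frag S i j) Q) ∨
  (i = 0 ∧ j = S.length)

/-- rot^j(Q): rotation moving the last j (mod |Q|) characters to the front. -/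
def rotR (Q : List α) (j : ℕ) : List α := Q.rotate (Q.length - j % Q.length)

/-- |Mis(T,Q*) ∩ [a,b)|. -/
def misCount [DecidableEq α] [Inhabited α] (T Q : List α) (a b : ℕ) : ℕ :=
  ((Finset.Ico a b).filter (fun i => i < T.length ∧
     T.getD i default ≠ Q.getD (i % Q.length) default)).card

/-- μ_j: the total weight of aligned mismatch pairs of P and T against Q^∞ at shift j·|Q|:
a pair (τ = j|Q|+π, π) with π ∈ Mis(P,Q*), τ ∈ Mis(T,Q*) has weight 2 − δ_H(P[π],T[τ]). -/
def mu [DecidableEq α] [Inhabited α] (P T Q : List α) (j : ℕ) : ℕ :=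
  ∑ π ∈ Finset.range P.length,
    if P.getD π default ≠ Q.getD (π % Q.length) default ∧
       j * Q.length + π < T.length ∧
       T.getD (j * Q.length + π) default ≠ Q.getD ((j * Q.length + π) % Q.length) default
    then (if P.getD π default = T.getD (j * Q.length + π) default then 2 else 1)
    else 0

/-!
Take optimal alignments of `S` with the two substrings of `Q^∞`. Together they make at most `2k`
errors, so among the first `2k + 1` blocks of length `|Q|` of `S` one is aligned exactly by both.
That block equals both `Q^∞[x..x+|Q|)` and `Q^∞[x'..x'+|Q|)`, two rotations of `Q`, so
primitivity forces `x ≡ x' (mod |Q|)`. Cut both alignments inside the block where the `Q^∞` side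
reaches a multiple of `|Q|`; an optimal alignment cut anywhere splits the edit distance.
When `|Q| = 1`, cut at the end of `S`.
-/

section EditDist

variable [DecidableEq α]

@[simp] theorem editDist_nil_nil : editDist ([] : List α) [] = 0 := by
  simp [editDist, levenshtein]

theorem editDist_nil_cons (b : α) (t : List α) : editDist [] (b :: t) = editDist [] t + 1 := by
  simp [editDist, levenshtein, Levenshtein.defaultCost, add_comm]

theorem editDist_cons_nil (a : α) (s : List α) : editDist (a :: s) [] = editDist s [] + 1 := by
  simp [editDist, levenshtein, Levenshtein.defaultCost, add_comm]

theorem editDist_cons_cons (a b : α) (s t : List α) :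
    editDist (a :: s) (b :: t) = min (editDist s (b :: t) + 1)
      (min (editDist (a :: s) t + 1) (editDist s t + if a = b then 0 else 1)) := by
  simp [editDist, levenshtein, Levenshtein.defaultCost, add_comm]

theorem editDist_cons_left_le (a : α) (s t : List α) :
    editDist (a :: s) t ≤ editDist s t + 1 := by
  cases t with
  | nil => rw [editDist_cons_nil]
  | cons b t => rw [editDist_cons_cons]; exact min_le_left _ _

theorem editDist_cons_right_le (b : α) (s t : List α) :
    editDist s (b :: t) ≤ editDist s t + 1 := by
  cases s with
  | nil => rw [editDist_nil_cons]
  | cons a s => rw [editDist_cons_cons]; exact min_le_of_right_le (min_le_left _ _)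

theorem editDist_cons_cons_le (a b : α) (s t : List α) :
    editDist (a :: s) (b :: t) ≤ editDist s t + if a = b then 0 else 1 := by
  rw [editDist_cons_cons]; exact min_le_of_right_le (min_le_right _ _)

end EditDist

/-- An alignment of two strings, as its list of columns; a column `(some a, none)` deletes `a`,
`(none, some b)` inserts `b`, and `(some a, some b)` matches or substitutes. -/
abbrev EditScript (α : Type*) := List (Option α × Option α)

namespace EditScript

def src (A : EditScript α) : List α := A.filterMap Prod.fst

def tgt (A : EditScript α) : List α := A.filterMap Prod.snd

def cost [DecidableEq α] (A : EditScript α) : ℕ := A.countP fun c => c.1 ≠ c.2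

@[simp] theorem src_append (A B : EditScript α) : src (A ++ B) = src A ++ src B :=
  List.filterMap_append

@[simp] theorem tgt_append (A B : EditScript α) : tgt (A ++ B) = tgt A ++ tgt B :=
  List.filterMap_append

@[simp] theorem src_nil : src ([] : EditScript α) = [] := rfl

@[simp] theorem tgt_nil : tgt ([] : EditScript α) = [] := rfl

@[simp] theorem src_cons (c : Option α × Option α) (A : EditScript α) :
    src (c :: A) = c.1.toList ++ src A := by
  rcases c with ⟨_ | a, b⟩ <;> rfl

@[simp] theorem tgt_cons (c : Option α × Option α) (A : EditScript α) :
    tgt (c :: A) = c.2.toList ++ tgt A := by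
  rcases c with ⟨a, _ | b⟩ <;> rfl

theorem exists_eq_append_src_length (A : EditScript α) {u : ℕ} (hu : u ≤ (src A).length) :
    ∃ B C, A = B ++ C ∧ (src B).length = u := by
  induction A generalizing u with
  | nil => exact ⟨[], [], rfl, by simp_all⟩
  | cons c A ih =>
    rcases u with _ | u
    · exact ⟨[], c :: A, rfl, rfl⟩
    rcases c with ⟨_ | a, b⟩
    · obtain ⟨B, C, rfl, hB⟩ := ih (u := u + 1) (by simpa using hu)
      exact ⟨(none, b) :: B, C, rfl, by simpa⟩
    · obtain ⟨B, C, rfl, hB⟩ := ih (u := u) (by simp at hu; omega)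
      exact ⟨(some a, b) :: B, C, rfl, by simpa⟩

variable [DecidableEq α]

@[simp] theorem cost_nil : cost ([] : EditScript α) = 0 := rfl

@[simp] theorem cost_cons (c : Option α × Option α) (A : EditScript α) :
    cost (c :: A) = cost A + if c.1 = c.2 then 0 else 1 := by
  simp only [cost, List.countP_cons, decide_not]
  split_ifs <;> simp_all

@[simp] theorem cost_append (A B : EditScript α) : cost (A ++ B) = cost A + cost B :=
  List.countP_append

theorem src_eq_tgt_of_cost_eq_zero {A : EditScript α} (h : cost A = 0) : src A = tgt A := by
  refine List.filterMap_congr fun c hc => ?_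
  simpa using List.countP_eq_zero.1 h c hc

theorem editDist_le_cost (A : EditScript α) : editDist (src A) (tgt A) ≤ cost A := by
  induction A with
  | nil => simp
  | cons c A ih =>
    rcases c with ⟨_ | a, _ | b⟩
    · simpa using ih
    · simpa using (editDist_cons_right_le b _ _).trans (Nat.add_le_add_right ih 1)
    · simpa using (editDist_cons_left_le a _ _).trans (Nat.add_le_add_right ih 1)
    · simpa using (editDist_cons_cons_le a b _ _).trans (Nat.add_le_add_right ih _)

theorem exists_cost_eq_editDist (S T : List α) :
    ∃ A : EditScript α, src A = S ∧ tgt A = T ∧ cost A = editDist S T := by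
  induction S generalizing T with
  | nil =>
    induction T with
    | nil => exact ⟨[], rfl, rfl, by simp⟩
    | cons b T ih =>
      obtain ⟨A, hS, hT, hc⟩ := ih
      exact ⟨(none, some b) :: A, by simpa, by simpa, by simp [hc, editDist_nil_cons]⟩
  | cons a S ihS =>
    induction T with
    | nil =>
      obtain ⟨A, hS, hT, hc⟩ := ihS []
      exact ⟨(some a, none) :: A, by simpa, by simpa, by simp [hc, editDist_cons_nil]⟩
    | cons b T ihT =>
      rw [editDist_cons_cons]
      rcases min_choice (editDist S (b :: T) + 1)
        (min (editDist (a :: S) T + 1) (editDist S T + if a = b then 0 else 1)) with h | h <;>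
        rw [h]
      · obtain ⟨A, hS, hT, hc⟩ := ihS (b :: T)
        exact ⟨(some a, none) :: A, by simpa, by simpa, by simp [hc]⟩
      rcases min_choice (editDist (a :: S) T + 1) (editDist S T + if a = b then 0 else 1)
        with h | h <;> rw [h]
      · obtain ⟨A, hS, hT, hc⟩ := ihT
        exact ⟨(none, some b) :: A, by simpa, by simpa, by simp [hc]⟩
      · obtain ⟨A, hS, hT, hc⟩ := ihS T
        exact ⟨(some a, some b) :: A, by simpa, by simpa, by simp [hc]⟩

theorem editDist_append_le (S S' T T' : List α) :
    editDist (S ++ S') (T ++ T') ≤ editDist S T + editDist S' T' := by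
  obtain ⟨A, rfl, rfl, hA⟩ := exists_cost_eq_editDist S T
  obtain ⟨B, rfl, rfl, hB⟩ := exists_cost_eq_editDist S' T'
  simpa [hA, hB] using editDist_le_cost (A ++ B)

theorem editDist_eq_add_of_cost_eq {A B : EditScript α}
    (hopt : cost (A ++ B) = editDist (src (A ++ B)) (tgt (A ++ B))) :
    editDist (src (A ++ B)) (tgt (A ++ B)) =
      editDist (src A) (tgt A) + editDist (src B) (tgt B) := by
  have := editDist_le_cost A
  have := editDist_le_cost B
  have := editDist_append_le (src A) (src B) (tgt A) (tgt B)
  simp only [cost_append, src_append, tgt_append] at hopt ⊢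
  omega


def ExactOn (A : EditScript α) (u m : ℕ) : Prop :=
  ∃ B W C, A = B ++ W ++ C ∧ (src B).length = u ∧ (src W).length = m ∧ cost W = 0

theorem ExactOn.append_left {A : EditScript α} {u m : ℕ} (h : ExactOn A u m)
    (B : EditScript α) :
    ExactOn (B ++ A) ((src B).length + u) m := by
  obtain ⟨B', W, C, rfl, hu, hm, hW⟩ := h
  exact ⟨B ++ B', W, C, by simp, by simp [hu], hm, hW⟩

/-- Pigeonhole over `n` consecutive blocks of length `m`: each error spoils at most one block. -/
theorem exists_exactOn_of_cost_add_cost_lt (m : ℕ) :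
    ∀ (n : ℕ) (A A' : EditScript α), src A = src A' → n * m ≤ (src A).length →
      cost A + cost A' < n → ∃ u, ExactOn A u m ∧ ExactOn A' u m
  | 0, _, _, _, _, hcost => absurd hcost (Nat.not_lt_zero _)
  | n + 1, A, A', hsrc, hlen, hcost => by
    rw [add_mul, one_mul] at hlen
    obtain ⟨B, C, rfl, hB⟩ := exists_eq_append_src_length A (u := m) (by omega)
    obtain ⟨B', C', rfl, hB'⟩ :=
      exists_eq_append_src_length A' (u := m) (by rw [← hsrc]; omega)
    simp only [src_append, List.length_append] at hsrc hlen
    obtain ⟨-, hC⟩ := List.append_inj hsrc (hB.trans hB'.symm)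
    by_cases hexact : cost B = 0 ∧ cost B' = 0
    · exact ⟨0, ⟨[], B, C, rfl, rfl, hB, hexact.1⟩,
        ⟨[], B', C', rfl, rfl, hB', hexact.2⟩⟩
    · simp only [cost_append] at hcost
      obtain ⟨u, hu, hu'⟩ :=
        exists_exactOn_of_cost_add_cost_lt m n C C' hC (by omega) (by omega)
      exact ⟨m + u, hB ▸ hu.append_left B, hB' ▸ hu'.append_left B'⟩

theorem ExactOn.exists_editDist_eq_add {A : EditScript α} {u m : ℕ} (h : ExactOn A u m)
    (hopt : cost A = editDist (src A) (tgt A)) :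
    ∃ c, ((tgt A).drop c).take m = ((src A).drop u).take m ∧ c + m ≤ (tgt A).length ∧
      ∀ e ≤ m, editDist (src A) (tgt A) =
        editDist ((src A).take (u + e)) ((tgt A).take (c + e)) +
          editDist ((src A).drop (u + e)) ((tgt A).drop (c + e)) := by
  obtain ⟨B, W, C, rfl, hu, hm, hW⟩ := h
  have hWt := src_eq_tgt_of_cost_eq_zero hW
  refine ⟨(tgt B).length, ?_, ?_, fun e he => ?_⟩
  · simp [← hu, ← hm, hWt]
  · simp [← hm, hWt]
  obtain ⟨W₁, W₂, rfl, he⟩ := exists_eq_append_src_length W (u := e) (by omega)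
  simp only [cost_append, Nat.add_eq_zero_iff] at hW
  have hW₁ := src_eq_tgt_of_cost_eq_zero hW.1
  have hS : src (B ++ (W₁ ++ W₂) ++ C) = src (B ++ W₁) ++ src (W₂ ++ C) := by simp
  have hT : tgt (B ++ (W₁ ++ W₂) ++ C) = tgt (B ++ W₁) ++ tgt (W₂ ++ C) := by simp
  have hlenS : (src (B ++ W₁)).length = u + e := by simp [hu, he]
  have hlenT : (tgt (B ++ W₁)).length = (tgt B).length + e := by simp [← hW₁, he]
  rw [hS, hT, List.take_left' hlenS, List.take_left' hlenT, List.drop_left' hlenS,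
    List.drop_left' hlenT, ← src_append, ← tgt_append]
  exact editDist_eq_add_of_cost_eq (by simpa using hopt)

end EditScript

section RepPrefix

variable [Inhabited α] (Q : List α)

@[simp] theorem repPrefix_length (a b : ℕ) : (repPrefix Q a b).length = b - a := by
  simp [repPrefix]

@[simp] theorem repPrefix_self (a : ℕ) : repPrefix Q a a = [] := by
  simp [repPrefix]

theorem repPrefix_append {a b c : ℕ} (hac : a ≤ c) (hcb : c ≤ b) :
    repPrefix Q a b = repPrefix Q a c ++ repPrefix Q c b := by
  have h := List.range'_append (s := a) (m := c - a) (n := b - c) (step := 1)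
  rw [show a + 1 * (c - a) = c by omega, show c - a + (b - c) = b - a by omega] at h
  simp only [repPrefix, ← List.map_append, h]

theorem repPrefix_take {a b c : ℕ} (h : c ≤ b - a) :
    (repPrefix Q a b).take c = repPrefix Q a (a + c) := by
  rcases Nat.eq_zero_or_pos c with rfl | hc
  · simp
  rw [repPrefix_append Q (c := a + c) (by omega) (by omega), take_left' (by simp)]

theorem repPrefix_drop {a b c : ℕ} (h : c ≤ b - a) :
    (repPrefix Q a b).drop c = repPrefix Q (a + c) b := by
  rcases Nat.eq_zero_or_pos c with rfl | hc
  · simp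
  rw [repPrefix_append Q (c := a + c) (by omega) (by omega), drop_left' (by simp)]

theorem repPrefix_add_length (x : ℕ) : repPrefix Q x (x + Q.length) = Q.rotate x := by
  refine List.ext_getElem (by simp) fun i hi _ => ?_
  have hQ : 0 < Q.length := by simp at hi; omega
  simp [repPrefix, getElem_rotate, add_comm x i, getElem?_eq_getElem (Nat.mod_lt _ hQ)]

end RepPrefix

theorem Nat.dvd_add_sub_mod {m : ℕ} (hm : 0 < m) (x : ℕ) : m ∣ x + (m - x % m) :=
  ⟨x / m + 1, by
    have := Nat.div_add_mod x m
    have := Nat.mod_lt x hm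
    rw [mul_add, mul_one]; omega⟩

theorem List.eq_flatten_replicate_of_append_comm {U V : List α} (h : V ++ U = U ++ V) :
    ∀ s, V.length = s * U.length → V = (replicate s U).flatten
  | 0, hV => by simpa using hV
  | s + 1, hV => by
    have hUV : U.length ≤ V.length := by rw [hV]; exact Nat.le_mul_of_pos_left _ s.succ_pos
    have hpre : V.take U.length = U := by
      rw [← take_append_of_le_length hUV, h, take_left]
    rw [← take_append_drop U.length V, hpre] at h ⊢
    have hcomm : V.drop U.length ++ U = U ++ V.drop U.length := by simpa using h
    rw [eq_flatten_replicate_of_append_comm hcomm s (by simp [hV, add_mul]),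
      replicate_succ, flatten_cons]

theorem Primitive.dvd_of_rotate_eq_self {Q : List α} (hQ : Primitive Q) {d : ℕ}
    (h : Q.rotate d = Q) : Q.length ∣ d := by
  have hm : 0 < Q.length := length_pos_iff.2 hQ.1
  rcases (Nat.gcd_le_right d hm).lt_or_eq with hlt | heq
  · exfalso
    -- shifts fixing `Q` are closed under addition and reduction mod `|Q|`, so `gcd d |Q|` fixes it
    have hmul : ∀ n, Q.rotate (d * n) = Q := fun n => by
      induction n with
      | zero => simp
      | succ n ih => rw [mul_add_one, ← rotate_rotate, ih, h]
    obtain ⟨a, -, ha⟩ := Nat.exists_mul_mod_eq_gcd hlt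
    set g := d.gcd Q.length
    have hg : Q.rotate g = Q := by rw [← ha, rotate_mod, hmul]
    obtain ⟨t, ht⟩ : g ∣ Q.length := Nat.gcd_dvd_right d Q.length
    have ht2 : 2 ≤ t := by
      by_contra! ht1
      interval_cases t <;> omega
    have hcomm : Q.drop g ++ Q.take g = Q.take g ++ Q.drop g := by
      rw [← rotate_eq_drop_append_take hlt.le, hg, take_append_drop]
    have hdrop := eq_flatten_replicate_of_append_comm hcomm (t - 1) (by
      rw [length_drop, length_take, min_eq_left hlt.le, Nat.sub_one_mul, mul_comm t, ← ht])
    refine hQ.2 (Q.take g) t ht2 ?_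
    calc Q = Q.take g ++ Q.drop g := (take_append_drop g Q).symm
      _ = _ := by rw [hdrop, ← flatten_cons, ← replicate_succ, Nat.sub_add_cancel (by omega)]
  · exact heq ▸ Nat.gcd_dvd_left d Q.length

theorem Primitive.mod_eq_of_rotate_eq {Q : List α} (hQ : Primitive Q) {x x' : ℕ}
    (h : Q.rotate x = Q.rotate x') : x % Q.length = x' % Q.length := by
  set c := Q.length - x % Q.length
  have hx : Q.length ∣ x + c := Nat.dvd_add_sub_mod (length_pos_iff.2 hQ.1) x
  have hx' : Q.length ∣ x' + c := by
    refine hQ.dvd_of_rotate_eq_self ?_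
    obtain ⟨n, hn⟩ := hx
    rw [← rotate_rotate, ← h, rotate_rotate, hn, rotate_length_mul]
  exact Nat.ModEq.add_right_cancel' c
    ((Nat.mod_eq_zero_of_dvd hx).trans (Nat.mod_eq_zero_of_dvd hx').symm)

theorem EditScript.ExactOn.exists_rotate_eq_and_split [DecidableEq α] [Inhabited α]
    {Q S : List α} {l r u : ℕ} {A : EditScript α} (hA : A.ExactOn u Q.length)
    (hS : EditScript.src A = S) (hT : EditScript.tgt A = repPrefix Q l r)
    (hopt : EditScript.cost A = editDist S (repPrefix Q l r)) :
    ∃ x, Q.rotate x = (S.drop u).take Q.length ∧ ∀ e ≤ Q.length,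
      editDist S (repPrefix Q l r) = editDist (S.take (u + e)) (repPrefix Q l (x + e)) +
        editDist (S.drop (u + e)) (repPrefix Q (x + e) r) := by
  subst hS
  obtain ⟨c, hwin, hc, hsplit⟩ := hA.exists_editDist_eq_add (hT ▸ hopt)
  rw [hT] at hwin hsplit
  rw [hT, repPrefix_length] at hc
  refine ⟨l + c, ?_, fun e he => ?_⟩
  · rw [← hwin, repPrefix_drop Q (by omega), repPrefix_take Q (by omega),
      repPrefix_add_length]
  · rw [hsplit e he, repPrefix_take Q (by omega), repPrefix_drop Q (by omega), add_assoc]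

theorem edit_split_general {α : Type*} [DecidableEq α] [Inhabited α]
    (S Q : List α) (k : ℕ) (hQ : Primitive Q)
    (hlen : (2 * k + 1) * Q.length ≤ S.length ∨ Q.length = 1)
    (l r l' r' : ℕ)
    (h1 : editDist S (repPrefix Q l r) ≤ k)
    (h2 : editDist S (repPrefix Q l' r') ≤ k) :
    ∃ (j j' t : ℕ), t ≤ S.length ∧
      editDist S (repPrefix Q l r)
        = editDist (S.take t) (repPrefix Q l (j * Q.length))
          + editDist (S.drop t) (repPrefix Q (j * Q.length) r) ∧
      editDist S (repPrefix Q l' r')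
        = editDist (S.take t) (repPrefix Q l' (j' * Q.length))
          + editDist (S.drop t) (repPrefix Q (j' * Q.length) r') := by
  rcases hlen with hlen | hQ1
  swap
  · exact ⟨r, r', S.length, le_rfl, by simp [hQ1], by simp [hQ1]⟩
  obtain ⟨A, hS, hT, hA⟩ := EditScript.exists_cost_eq_editDist S (repPrefix Q l r)
  obtain ⟨A', hS', hT', hA'⟩ := EditScript.exists_cost_eq_editDist S (repPrefix Q l' r')
  obtain ⟨u, hu, hu'⟩ := EditScript.exists_exactOn_of_cost_add_cost_lt Q.length (2 * k + 1)
    A A' (hS.trans hS'.symm) (hS ▸ hlen) (by omega)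
  obtain ⟨x, hx, hsplit⟩ := hu.exists_rotate_eq_and_split hS hT hA
  obtain ⟨x', hx', hsplit'⟩ := hu'.exists_rotate_eq_and_split hS' hT' hA'
  have hxx' := hQ.mod_eq_of_rotate_eq (hx.trans hx'.symm)
  have hwin : Q.length ≤ S.length - u := by simpa using congrArg length hx
  -- cut where `x` reaches the next multiple of `|Q|`; by `hxx'`, so does `x'`
  have hm : 0 < Q.length := length_pos_iff.2 hQ.1
  obtain ⟨j, hj⟩ := Nat.dvd_add_sub_mod hm x
  obtain ⟨j', hj'⟩ := Nat.dvd_add_sub_mod hm x'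
  rw [← hxx'] at hj'
  refine ⟨j, j', u + (Q.length - x % Q.length), by omega, ?_, ?_⟩
  · rw [mul_comm, ← hj]; exact hsplit _ (Nat.sub_le _ _)
  · rw [mul_comm, ← hj']; exact hsplit' _ (Nat.sub_le _ _)

/-- splitting a string that is close (in edit distance) to two substrings
of Q^∞, consistently for both alignments. -/
theorem edit_split {α : Type*} [DecidableEq α] [Inhabited α]
    (S Q : List α) (k : ℕ) (hk : 0 < k) (hQ : Primitive Q)
    (hlen : (2 * k + 1) * Q.length ≤ S.length ∨ Q.length = 1)
    (l r l' r' : ℕ) (hlr : l ≤ r) (hlr' : l' ≤ r')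
    (h1 : editDist S (repPrefix Q l r) ≤ k)
    (h2 : editDist S (repPrefix Q l' r') ≤ k) :
    ∃ (j j' t : ℕ), t ≤ S.length ∧
      editDist S (repPrefix Q l r)
        = editDist (S.take t) (repPrefix Q l (j * Q.length))
          + editDist (S.drop t) (repPrefix Q (j * Q.length) r) ∧
      editDist S (repPrefix Q l' r')
        = editDist (S.take t) (repPrefix Q l' (j' * Q.length))
          + editDist (S.drop t) (repPrefix Q (j' * Q.length) r') :=
  edit_split_general S Q k hQ hlen l r l' r' h1 h2
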